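/- arXiv:hep-th/0310218 — 5 statements merged into one kernel-verified Lean document; each statement's English description precedes it below -/
import Mathlib

section
/- Let (e_a) be a basis of 𝔤 with dual basis (e^a) of 𝔤*, and let r = Σ_a (0,e^a) ⊗ (e_a,0) ∈ 𝔥 ⊗ 𝔥. Then r satisfies the classical Yang–Baxter equation [r₁₂,r₁₃] + [r₁₂,r₂₃] + [r₁₃,r₂₃] = 0 in 𝔥 ⊗ 𝔥 ⊗ 𝔥, where for r = Σ_i x_i ⊗ y_i and s = Σ_j x'_j ⊗ y'_j one sets [r₁₂,s₁₃] = Σ_{i,j} [x_i,x'_j] ⊗ y_i ⊗ y'_j, [r₁₂,s₂₃] = Σ_{i,j} x_i ⊗ [y_i,x'_j] ⊗ y'_j, and [r₁₃,s₂₃] = Σ_{i,j} x_i ⊗ x'_j ⊗ [y_i,y'_j] (these trilinear expressions being the well-defined bilinear extensions of the indicated maps). -/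
/-!
STATEMENT 3: With `(e_a)` a basis of `𝔤`, dual basis `(e^a)` of `𝔤*`,
`J_a = (e_a, 0)` and `P^a = (0, e^a)` in `𝔥 = 𝔤 ⊕ 𝔤*`, the classical `r`-matrix
`r = Σ_a P^a ⊗ J_a` satisfies the classical Yang–Baxter equation
`[r₁₂,r₁₃] + [r₁₂,r₂₃] + [r₁₃,r₂₃] = 0` in `𝔥 ⊗ 𝔥 ⊗ 𝔥`, where the three terms are the
bilinear extensions `Σ_{a,b} [P^a,P^b]⊗J_a⊗J_b`, `Σ_{a,b} P^a⊗[J_a,P^b]⊗J_b` and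
`Σ_{a,b} P^a⊗P^b⊗[J_a,J_b]`.
-/

open scoped TensorProduct

variable {L : Type*} [LieRing L] [LieAlgebra ℝ L]

/-- The coadjoint action: `(coad ξ α) ζ = −α ⁅ξ, ζ⁆`. -/
noncomputable def coad (ξ : L) (α : Module.Dual ℝ L) : Module.Dual ℝ L :=
  - (α ∘ₗ (LieAlgebra.ad ℝ L ξ))

/-- The bracket of `𝔥 = 𝔤 ⊕ 𝔤*`. -/
noncomputable def hBracket (x y : L × Module.Dual ℝ L) : L × Module.Dual ℝ L :=
  (⁅x.1, y.1⁆, coad x.1 y.2 - coad y.1 x.2)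

/-- `J_a = (e_a, 0)`. -/
noncomputable def Jgen {ι : Type*} (b : Module.Basis ι ℝ L) (a : ι) : L × Module.Dual ℝ L :=
  (b a, 0)

/-- `P^a = (0, e^a)`. -/
noncomputable def Pgen {ι : Type*} [Fintype ι] [DecidableEq ι] (b : Module.Basis ι ℝ L) (a : ι) :
    L × Module.Dual ℝ L :=
  (0, b.dualBasis a)

/-! With `T = ad e_a`, `[J_a, P^b] = (0, -(e^b ∘ T))` and `[J_a, J_b] = (T e_b, 0)`, while brackets
of two `P`'s vanish. So for each `a` the second and third terms of the equation are `P^a ⊗ -`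
applied to `-∑_b (e^b ∘ T) ⊗ e_b` and `∑_b e^b ⊗ T e_b`. These cancel because `∑_b e^b ⊗ e_b` is
the identity of `𝔤`, across which `T` can be moved from one factor to the other. -/

section

variable {R M N ι : Type*} [CommSemiring R] [AddCommMonoid M] [Module R M] [AddCommMonoid N]
  [Module R N] [Fintype ι] [DecidableEq ι]

theorem Module.Basis.sum_apply_dualBasis_comp (b : Module.Basis ι R M)
    (φ : Module.Dual R M →ₗ[R] M →ₗ[R] N) (T : M →ₗ[R] M) :
    ∑ j, φ (b.dualBasis j ∘ₗ T) (b j) = ∑ j, φ (b.dualBasis j) (T (b j)) := by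
  calc ∑ j, φ (b.dualBasis j ∘ₗ T) (b j)
      = ∑ j, ∑ k, b.dualBasis j (T (b k)) • φ (b.dualBasis k) (b j) := by
        refine Finset.sum_congr rfl fun j _ => ?_
        rw [← b.dualBasis.sum_repr (b.dualBasis j ∘ₗ T)]
        simp
    _ = ∑ j, ∑ k, b.dualBasis k (T (b j)) • φ (b.dualBasis j) (b k) := Finset.sum_comm
    _ = ∑ j, φ (b.dualBasis j) (T (b j)) := by
        refine Finset.sum_congr rfl fun j _ => ?_
        conv_rhs => rw [← b.sum_repr (T (b j))]
        simp only [map_sum, map_smul, Module.Basis.dualBasis_apply]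

end

theorem hBracket_inr_inr (α β : Module.Dual ℝ L) : hBracket (0, α) (0, β) = 0 := by
  simp [hBracket, coad]

theorem hBracket_inl_inr (ξ : L) (α : Module.Dual ℝ L) :
    hBracket (ξ, 0) (0, α) = (0, -(α ∘ₗ LieAlgebra.ad ℝ L ξ)) := by
  simp [hBracket, coad]

theorem hBracket_inl_inl (ξ η : L) : hBracket (ξ, 0) (η, 0) = (LieAlgebra.ad ℝ L ξ η, 0) := by
  simp [hBracket, coad]

theorem classical_yang_baxter {ι : Type*} [Fintype ι] [DecidableEq ι] (b : Module.Basis ι ℝ L) :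
    (∑ i : ι, ∑ j : ι,
        hBracket (Pgen b i) (Pgen b j) ⊗ₜ[ℝ] (Jgen b i ⊗ₜ[ℝ] Jgen b j))
    + (∑ i : ι, ∑ j : ι,
        Pgen b i ⊗ₜ[ℝ] (hBracket (Jgen b i) (Pgen b j) ⊗ₜ[ℝ] Jgen b j))
    + (∑ i : ι, ∑ j : ι,
        Pgen b i ⊗ₜ[ℝ] (Pgen b j ⊗ₜ[ℝ] hBracket (Jgen b i) (Jgen b j)))
    = (0 : (L × Module.Dual ℝ L) ⊗[ℝ] ((L × Module.Dual ℝ L) ⊗[ℝ] (L × Module.Dual ℝ L))) := by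
  -- `φ i α ξ = P^i ⊗ ((0, α) ⊗ (ξ, 0))`
  let φ (i : ι) := ((TensorProduct.mk ℝ _ _).compl₁₂ (LinearMap.inr ℝ L (Module.Dual ℝ L))
    (LinearMap.inl ℝ L (Module.Dual ℝ L))).compr₂ (TensorProduct.mk ℝ _ _ (Pgen b i))
  have cancel (i : ι) : ∑ j, φ i (-(b.dualBasis j ∘ₗ LieAlgebra.ad ℝ L (b i))) (b j)
      + ∑ j, φ i (b.dualBasis j) (LieAlgebra.ad ℝ L (b i) (b j)) = 0 := by
    rw [← b.sum_apply_dualBasis_comp, ← Finset.sum_add_distrib]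
    refine Finset.sum_eq_zero fun j _ => ?_
    rw [← LinearMap.add_apply, ← map_add, neg_add_cancel, map_zero, LinearMap.zero_apply]
  simp only [φ, LinearMap.compr₂_apply, LinearMap.compl₁₂_apply, TensorProduct.mk_apply,
    LinearMap.inr_apply, LinearMap.inl_apply] at cancel
  simp only [Pgen, Jgen, hBracket_inr_inr, hBracket_inl_inr, hBracket_inl_inl,
    TensorProduct.zero_tmul, Finset.sum_const_zero, zero_add, ← Finset.sum_add_distrib] at cancel ⊢
  exact Finset.sum_eq_zero fun i _ => cancel i
end

section
/- Fix n, g ∈ ℕ and elements u_{M₁},…,u_{Mₙ}, u_{A₁}, u_{B₁},…,u_{A_g}, u_{B_g} ∈ G, and set u_{K_i} = u_{B_i}u_{A_i}⁻¹u_{B_i}⁻¹u_{A_i}. For j = (j^{M₁},…,j^{Mₙ}, j^{A₁}, j^{B₁},…,j^{A_g}, j^{B_g}) ∈ V^{n+2g} set j^{H_i} = (Id − Ad*(u_{A_i}⁻¹u_{B_i}⁻¹u_{A_i})) j^{A_i} + (Ad*(u_{A_i}⁻¹u_{B_i}⁻¹u_{A_i}) − Ad*(u_{B_i}⁻¹u_{A_i}))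 j^{B_i}. Define K : V^{n+2g} → V^{n+2g}, K(j) = j′, by: j′^{M_i} = j^{M_i} − (Id − Ad*(u_{M_i}))[ Σ_{k=i+1}^{n} Ad*(u_{M_{k−1}}⋯u_{M_{i+1}}) j^{M_k} + Σ_{k=1}^{g} Ad*(u_{K_{k−1}}⋯u_{K_1}·u_{Mₙ}⋯u_{M_{i+1}}) j^{H_k} ]; j′^{A_i} = j^{A_i} + Ad*(u_{A_i}⁻¹)(j^{A_i} − j^{B_i}) + (Ad*(u_{A_i}) − Ad*(u_{B_i}u_{A_i}⁻¹)) Σ_{k=i+1}^{g} Ad*(u_{K_{k−1}}⋯u_{K_{i+1}}) j^{H_k}; j′^{B_i} = j^{B_i} + Ad*(u_{A_i}⁻¹)(j^{A_i} − j^{B_i}) + (Ad*(u_{B_i}) − Ad*(u_{B_i}u_{A_i}⁻¹)) Σ_{k=i+1}^{g} Ad*(u_{K_{k−1}}⋯u_{K_{i+1}}) j^{H_k} (all empty products of group elements being the identity of G and empty sums being 0). Define K′ : V^{n+2g} → V^{n+2g}, K′(j′) = j, by: j^{M_i} = j′^{M_i} + (Id − Ad*(u_{M_i}))[ Σ_{k=i+1}^{n}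 j′^{M_k} + Σ_{k=1}^{g} ((Id − Ad*(u_{A_k}⁻¹)) j′^{A_k} + (Ad*(u_{A_k}⁻¹) − Ad*(u_{B_k}⁻¹u_{A_k})) j′^{B_k}) ]; j^{A_i} = j′^{A_i} − Ad*(u_{A_i}⁻¹)(j′^{A_i} − j′^{B_i}) + (Id − Ad*(u_{A_i})) Σ_{k=i+1}^{g} ((Id − Ad*(u_{A_k}⁻¹)) j′^{A_k} + (Ad*(u_{A_k}⁻¹) − Ad*(u_{B_k}⁻¹u_{A_k})) j′^{B_k}); j^{B_i} = j′^{B_i} − Ad*(u_{A_i}⁻¹)(j′^{A_i} − j′^{B_i}) + (Id − Ad*(u_{B_i})) Σ_{k=i+1}^{g} ((Id − Ad*(u_{A_k}⁻¹)) j′^{A_k} + (Ad*(u_{A_k}⁻¹) − Ad*(u_{B_k}⁻¹u_{A_k})) j′^{B_k}). Then K′ ∘ K = id and K ∘ K′ = id on V^{n+2g}; i.e. the decoupling transformation K is bijective with inverse K′. -/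
/-!
STATEMENT 5: The decoupling transformation `K : V^{n+2g} → V^{n+2g}` (given by the
explicit formulas of Def. 2.3 of the paper, with `Ad*(u) := π(u⁻¹)`) is bijective, with
inverse the explicitly given map `K′`; i.e. `K′ ∘ K = id` and `K ∘ K′ = id`.
Indices are 0-based here: the tuple `(j^{M_1},…,j^{M_n},j^{A_1},j^{B_1},…,j^{A_g},j^{B_g})`
is modelled as an element of `(Fin n → V) × (Fin g → V) × (Fin g → V)`, and the fixed
group elements `u_{M_i}, u_{A_i}, u_{B_i}` as functions `ℕ → G` (only the first `n`
resp. `g` values are ever used).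
-/

variable {G V : Type*} [Group G] [AddCommGroup V] [Module ℝ V]

/-- `Ad*(u) := π(u⁻¹)`. -/
def Ads (π : G →* (V ≃ₗ[ℝ] V)) (u : G) : V →ₗ[ℝ] V := (π u⁻¹ : V ≃ₗ[ℝ] V)

/-- The descending ordered product `f (hi-1) * f (hi-2) * ⋯ * f lo`
(the identity if `hi ≤ lo`). -/
def prodD (f : ℕ → G) (lo hi : ℕ) : G :=
  ((List.range (hi - lo)).map fun t => f (hi - 1 - t)).prod

/-- Extension of a finite tuple of vectors by `0`. -/
def extV {n : ℕ} (j : Fin n → V) : ℕ → V := fun k => if h : k < n then j ⟨k, h⟩ else 0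

/-- `u_{K_i} = u_{B_i} u_{A_i}⁻¹ u_{B_i}⁻¹ u_{A_i}`. -/
def uKel (uA uB : ℕ → G) (i : ℕ) : G := uB i * (uA i)⁻¹ * (uB i)⁻¹ * uA i

/-- `j^{H_i} = (Id − Ad*(u_{A_i}⁻¹u_{B_i}⁻¹u_{A_i})) j^{A_i}
      + (Ad*(u_{A_i}⁻¹u_{B_i}⁻¹u_{A_i}) − Ad*(u_{B_i}⁻¹u_{A_i})) j^{B_i}`. -/
def jHel (π : G →* (V ≃ₗ[ℝ] V)) (uA uB : ℕ → G) (jA jB : ℕ → V) (i : ℕ) : V :=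
  (jA i - Ads π ((uA i)⁻¹ * (uB i)⁻¹ * uA i) (jA i)) +
    (Ads π ((uA i)⁻¹ * (uB i)⁻¹ * uA i) (jB i) - Ads π ((uB i)⁻¹ * uA i) (jB i))

/-- The decoupling transformation `K`. -/
def Kmap (π : G →* (V ≃ₗ[ℝ] V)) (n g : ℕ) (uM uA uB : ℕ → G)
    (j : (Fin n → V) × (Fin g → V) × (Fin g → V)) :
    (Fin n → V) × (Fin g → V) × (Fin g → V) :=
  let jM : ℕ → V := extV j.1
  let jA : ℕ → V := extV j.2.1
  let jB : ℕ → V := extV j.2.2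
  let uK : ℕ → G := uKel uA uB
  let jH : ℕ → V := jHel π uA uB jA jB
  ( fun i =>
      let S : V :=
        (∑ k ∈ Finset.Ico ((i : ℕ) + 1) n, Ads π (prodD uM ((i : ℕ) + 1) k) (jM k)) +
          ∑ k ∈ Finset.range g,
            Ads π (prodD uK 0 k * prodD uM ((i : ℕ) + 1) n) (jH k)
      jM (i : ℕ) - (S - Ads π (uM (i : ℕ)) S),
    fun i =>
      let T : V :=
        ∑ k ∈ Finset.Ico ((i : ℕ) + 1) g, Ads π (prodD uK ((i : ℕ) + 1) k) (jH k)
      jA (i : ℕ) + Ads π (uA (i : ℕ))⁻¹ (jA (i : ℕ) - jB (i : ℕ)) +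
        (Ads π (uA (i : ℕ)) T - Ads π (uB (i : ℕ) * (uA (i : ℕ))⁻¹) T),
    fun i =>
      let T : V :=
        ∑ k ∈ Finset.Ico ((i : ℕ) + 1) g, Ads π (prodD uK ((i : ℕ) + 1) k) (jH k)
      jB (i : ℕ) + Ads π (uA (i : ℕ))⁻¹ (jA (i : ℕ) - jB (i : ℕ)) +
        (Ads π (uB (i : ℕ)) T - Ads π (uB (i : ℕ) * (uA (i : ℕ))⁻¹) T) )

/-- The handle/puncture summand
`(Id − Ad*(u_{A_k}⁻¹)) j′^{A_k} + (Ad*(u_{A_k}⁻¹) − Ad*(u_{B_k}⁻¹u_{A_k})) j′^{B_k}`. -/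
def Wel (π : G →* (V ≃ₗ[ℝ] V)) (uA uB : ℕ → G) (jA' jB' : ℕ → V) (k : ℕ) : V :=
  (jA' k - Ads π (uA k)⁻¹ (jA' k)) +
    (Ads π (uA k)⁻¹ (jB' k) - Ads π ((uB k)⁻¹ * uA k) (jB' k))

/-- The inverse decoupling transformation `K′`. -/
def Kmap' (π : G →* (V ≃ₗ[ℝ] V)) (n g : ℕ) (uM uA uB : ℕ → G)
    (j' : (Fin n → V) × (Fin g → V) × (Fin g → V)) :
    (Fin n → V) × (Fin g → V) × (Fin g → V) :=
  let jM' : ℕ → V := extV j'.1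
  let jA' : ℕ → V := extV j'.2.1
  let jB' : ℕ → V := extV j'.2.2
  let W : ℕ → V := Wel π uA uB jA' jB'
  ( fun i =>
      let S : V :=
        (∑ k ∈ Finset.Ico ((i : ℕ) + 1) n, jM' k) + ∑ k ∈ Finset.range g, W k
      jM' (i : ℕ) + (S - Ads π (uM (i : ℕ)) S),
    fun i =>
      let T : V := ∑ k ∈ Finset.Ico ((i : ℕ) + 1) g, W k
      jA' (i : ℕ) - Ads π (uA (i : ℕ))⁻¹ (jA' (i : ℕ) - jB' (i : ℕ)) +
        (T - Ads π (uA (i : ℕ)) T),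
    fun i =>
      let T : V := ∑ k ∈ Finset.Ico ((i : ℕ) + 1) g, W k
      jB' (i : ℕ) - Ads π (uA (i : ℕ))⁻¹ (jA' (i : ℕ) - jB' (i : ℕ)) +
        (T - Ads π (uB (i : ℕ)) T) )

/-!
`K` and `K′` are triangular: each output component is the input component corrected by vectors
built from the later components only. In `K` these vectors solve backward recurrences
`Y k = x k + Ad*(f k) (Y (k + 1))` (with `f = u_M` along the punctures, `f = u_K` along the
handles); in `K′` they are plain partial sums. For a single handle, the summand of `K′` evaluated on
the output of `K` with correction `r` is `j^H + Ad*(u_K) r - r`, and symmetrically. Hence the sums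
of the outer map reproduce those of the inner one (by telescoping for `K′ ∘ K`, by uniqueness of the
solution of the recurrence for `K ∘ K′`), and both compositions reduce to the identity
componentwise.
-/

section Ads

variable (π : G →* (V ≃ₗ[ℝ] V))

@[simp]
theorem Ads_one_apply (x : V) : Ads π 1 x = x := by simp [Ads]

theorem Ads_mul_apply (u v : G) (x : V) : Ads π (u * v) x = Ads π v (Ads π u x) := by
  simp [Ads, map_mul]

end Ads

@[simp]
theorem prodD_self (f : ℕ → G) (i : ℕ) : prodD f i i = 1 := by simp [prodD]

theorem prodD_eq_prodD_succ_mul {f : ℕ → G} {lo hi : ℕ} (h : lo < hi) :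
    prodD f lo hi = prodD f (lo + 1) hi * f lo := by
  rw [prodD, prodD, show hi - lo = hi - (lo + 1) + 1 by omega, List.range_succ,
    List.map_append, List.prod_append]
  simp only [List.map_cons, List.map_nil, List.prod_cons, List.prod_nil, mul_one]
  congr 2
  omega

theorem extV_of_lt {M : Type*} [AddCommGroup M] {n : ℕ} (j : Fin n → M) {k : ℕ} (hk : k < n) :
    extV j k = j ⟨k, hk⟩ := by
  simp [extV, hk]

theorem eq_of_extV_eq {M : Type*} [AddCommGroup M] {n : ℕ} {j j' : Fin n → M}
    (h : ∀ k < n, extV j k = extV j' k) : j = j' :=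
  funext fun i => by simpa [extV_of_lt _ i.isLt] using h i i.isLt

theorem Finset.sum_Ico_eq_sub_of_eq_sub {M : Type*} [AddCommGroup M] {x Y : ℕ → M} {i m : ℕ}
    (him : i ≤ m) (h : ∀ k, i ≤ k → k < m → x k = Y k - Y (k + 1)) :
    ∑ k ∈ Finset.Ico i m, x k = Y i - Y m := by
  rw [Finset.sum_congr rfl fun k hk => h k (Finset.mem_Ico.1 hk).1 (Finset.mem_Ico.1 hk).2,
    ← neg_sub (Y m), ← Finset.sum_Ico_sub Y him, ← Finset.sum_neg_distrib]
  simp only [neg_sub]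

section BackwardSolution

variable (π : G →* (V ≃ₗ[ℝ] V))

/-- The solution `Y` of the backward recurrence `Y k = x k + Ad*(f k) (Y (k + 1))` for `k < m`
with terminal value `Y m = y`. -/
def backwardSolution (f : ℕ → G) (x : ℕ → V) (y : V) (m i : ℕ) : V :=
  ∑ k ∈ Finset.Ico i m, Ads π (prodD f i k) (x k) + Ads π (prodD f i m) y

variable {π} {f : ℕ → G} {x : ℕ → V} {y : V} {m : ℕ}

@[simp]
theorem backwardSolution_self : backwardSolution π f x y m m = y := by
  simp [backwardSolution]

theorem backwardSolution_of_lt {i : ℕ} (hi : i < m) :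
    backwardSolution π f x y m i = x i + Ads π (f i) (backwardSolution π f x y m (i + 1)) := by
  rw [backwardSolution, backwardSolution, Finset.sum_eq_sum_Ico_succ_bot hi, prodD_self,
    Ads_one_apply, map_add, map_sum, prodD_eq_prodD_succ_mul hi, Ads_mul_apply, add_assoc]
  congr 2
  refine Finset.sum_congr rfl fun k hk => ?_
  rw [prodD_eq_prodD_succ_mul (Finset.mem_Ico.1 hk).1, Ads_mul_apply]

theorem eq_backwardSolution {Y : ℕ → V} {i : ℕ} (him : i ≤ m)
    (hY : ∀ k, i ≤ k → k < m → Y k = x k + Ads π (f k) (Y (k + 1))) :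
    Y i = backwardSolution π f x (Y m) m i := by
  refine Nat.decreasingInduction' (P := fun k => Y k = backwardSolution π f x (Y m) m k)
    (fun k hkm hik ih => ?_) him backwardSolution_self.symm
  rw [hY k hik hkm, ih, backwardSolution_of_lt hkm]

end BackwardSolution

section Handle

variable (π : G →* (V ≃ₗ[ℝ] V))

def decoupleA (u v : G) (a b r : V) : V :=
  a + Ads π u⁻¹ (a - b) + (Ads π u r - Ads π (v * u⁻¹) r)

def decoupleB (u v : G) (a b r : V) : V :=
  b + Ads π u⁻¹ (a - b) + (Ads π v r - Ads π (v * u⁻¹) r)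

def recoupleA (u : G) (a b s : V) : V :=
  a - Ads π u⁻¹ (a - b) + (s - Ads π u s)

def recoupleB (u v : G) (a b s : V) : V :=
  b - Ads π u⁻¹ (a - b) + (s - Ads π v s)

variable {π} (u v : G) (a b r : V)

theorem recoupleA_decouple :
    recoupleA π u (decoupleA π u v a b r) (decoupleB π u v a b r) r = a := by
  simp only [recoupleA, decoupleA, decoupleB, map_add, map_sub, ← Ads_mul_apply,
    mul_inv_cancel, Ads_one_apply]
  abel

theorem recoupleB_decouple :
    recoupleB π u v (decoupleA π u v a b r) (decoupleB π u v a b r) r = b := by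
  simp only [recoupleB, decoupleA, decoupleB, map_add, map_sub, ← Ads_mul_apply,
    mul_inv_cancel, Ads_one_apply]
  abel

theorem decoupleA_recouple :
    decoupleA π u v (recoupleA π u a b r) (recoupleB π u v a b r) r = a := by
  simp only [recoupleA, decoupleA, recoupleB, map_add, map_sub, ← Ads_mul_apply,
    mul_inv_cancel, Ads_one_apply]
  abel

theorem decoupleB_recouple :
    decoupleB π u v (recoupleA π u a b r) (recoupleB π u v a b r) r = b := by
  simp only [recoupleA, decoupleB, recoupleB, map_add, map_sub, ← Ads_mul_apply,
    mul_inv_cancel, Ads_one_apply]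
  abel

variable {uA uB : ℕ → G} {a b a' b' : ℕ → V} {k : ℕ}

theorem Wel_of_decouple
    (ha : a' k = decoupleA π (uA k) (uB k) (a k) (b k) r)
    (hb : b' k = decoupleB π (uA k) (uB k) (a k) (b k) r) :
    Wel π uA uB a' b' k = jHel π uA uB a b k + (Ads π (uKel uA uB k) r - r) := by
  simp only [Wel, jHel, uKel, ha, hb, decoupleA, decoupleB, map_add, map_sub, ← Ads_mul_apply,
    mul_assoc, mul_inv_cancel_left, mul_inv_cancel, Ads_one_apply]
  abel

theorem jHel_of_recouple
    (ha : a' k = recoupleA π (uA k) (a k) (b k) r)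
    (hb : b' k = recoupleB π (uA k) (uB k) (a k) (b k) r) :
    jHel π uA uB a' b' k = Wel π uA uB a b k + (r - Ads π (uKel uA uB k) r) := by
  simp only [Wel, jHel, uKel, ha, hb, recoupleA, recoupleB, map_add, map_sub, ← Ads_mul_apply,
    mul_assoc, mul_inv_cancel_left]
  abel

end Handle

section Decoupling

variable (π : G →* (V ≃ₗ[ℝ] V)) {n g : ℕ} (uM uA uB : ℕ → G)
  (j : (Fin n → V) × (Fin g → V) × (Fin g → V))

-- `handleSum` and `punctureSum` are the vectors `T` and `S` of `Kmap`, `handleSum'` and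
-- `punctureSum'` those of `Kmap'`, as functions of the lower summation index `i + 1`.

def handleSum : ℕ → V :=
  backwardSolution π (uKel uA uB) (jHel π uA uB (extV j.2.1) (extV j.2.2)) 0 g

def punctureSum : ℕ → V :=
  backwardSolution π uM (extV j.1) (handleSum π uA uB j 0) n

def handleSum' (i : ℕ) : V :=
  ∑ k ∈ Finset.Ico i g, Wel π uA uB (extV j.2.1) (extV j.2.2) k

def punctureSum' (i : ℕ) : V :=
  ∑ k ∈ Finset.Ico i n, extV j.1 k + handleSum' π uA uB j 0

variable {π uM uA uB j} {k : ℕ}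

theorem extV_Kmap_fst (hk : k < n) :
    extV (Kmap π n g uM uA uB j).1 k =
      extV j.1 k - (punctureSum π uM uA uB j (k + 1) -
        Ads π (uM k) (punctureSum π uM uA uB j (k + 1))) := by
  have hS : Ads π (prodD uM (k + 1) n) (handleSum π uA uB j 0) = ∑ l ∈ Finset.range g,
      Ads π (prodD (uKel uA uB) 0 l * prodD uM (k + 1) n)
        (jHel π uA uB (extV j.2.1) (extV j.2.2) l) := by
    rw [handleSum, backwardSolution, map_zero, add_zero, map_sum, Finset.range_eq_Ico]
    simp only [Ads_mul_apply]
  rw [extV_of_lt _ hk, punctureSum, backwardSolution, hS]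
  rfl

theorem extV_Kmap_snd_fst (hk : k < g) :
    extV (Kmap π n g uM uA uB j).2.1 k =
      decoupleA π (uA k) (uB k) (extV j.2.1 k) (extV j.2.2 k) (handleSum π uA uB j (k + 1)) := by
  simp [extV_of_lt _ hk, handleSum, backwardSolution, decoupleA, Kmap]

theorem extV_Kmap_snd_snd (hk : k < g) :
    extV (Kmap π n g uM uA uB j).2.2 k =
      decoupleB π (uA k) (uB k) (extV j.2.1 k) (extV j.2.2 k) (handleSum π uA uB j (k + 1)) := by
  simp [extV_of_lt _ hk, handleSum, backwardSolution, decoupleB, Kmap]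

theorem extV_Kmap'_fst (hk : k < n) :
    extV (Kmap' π n g uM uA uB j).1 k =
      extV j.1 k + (punctureSum' π uA uB j (k + 1) -
        Ads π (uM k) (punctureSum' π uA uB j (k + 1))) := by
  rw [extV_of_lt _ hk, punctureSum', handleSum', ← Finset.range_eq_Ico]
  rfl

theorem extV_Kmap'_snd_fst (hk : k < g) :
    extV (Kmap' π n g uM uA uB j).2.1 k =
      recoupleA π (uA k) (extV j.2.1 k) (extV j.2.2 k) (handleSum' π uA uB j (k + 1)) := by
  rw [extV_of_lt _ hk]
  rfl

theorem extV_Kmap'_snd_snd (hk : k < g) :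
    extV (Kmap' π n g uM uA uB j).2.2 k =
      recoupleB π (uA k) (uB k) (extV j.2.1 k) (extV j.2.2 k) (handleSum' π uA uB j (k + 1)) := by
  rw [extV_of_lt _ hk]
  rfl

end Decoupling

section Inverse

variable {π : G →* (V ≃ₗ[ℝ] V)} {n g : ℕ} {uM uA uB : ℕ → G}
  {j : (Fin n → V) × (Fin g → V) × (Fin g → V)} {i : ℕ}

theorem handleSum'_Kmap (hi : i ≤ g) :
    handleSum' π uA uB (Kmap π n g uM uA uB j) i = handleSum π uA uB j i := by
  rw [handleSum', Finset.sum_Ico_eq_sub_of_eq_sub (Y := handleSum π uA uB j) hi fun k _ hk => ?_,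
    handleSum, backwardSolution_self, sub_zero]
  rw [Wel_of_decouple _ (extV_Kmap_snd_fst hk) (extV_Kmap_snd_snd hk),
    handleSum, backwardSolution_of_lt hk]
  abel

theorem punctureSum'_Kmap (hi : i ≤ n) :
    punctureSum' π uA uB (Kmap π n g uM uA uB j) i = punctureSum π uM uA uB j i := by
  rw [punctureSum', handleSum'_Kmap g.zero_le,
    Finset.sum_Ico_eq_sub_of_eq_sub (Y := punctureSum π uM uA uB j) hi fun k _ hk => ?_,
    punctureSum, backwardSolution_self, sub_add_cancel]
  rw [extV_Kmap_fst hk, punctureSum, backwardSolution_of_lt hk]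
  abel

theorem handleSum_Kmap' (hi : i ≤ g) :
    handleSum π uA uB (Kmap' π n g uM uA uB j) i = handleSum' π uA uB j i := by
  have hg : handleSum' π uA uB j g = 0 := by simp [handleSum']
  rw [handleSum, ← hg]
  refine (eq_backwardSolution hi fun k _ hk => ?_).symm
  rw [jHel_of_recouple _ (extV_Kmap'_snd_fst hk) (extV_Kmap'_snd_snd hk), handleSum',
    Finset.sum_eq_sum_Ico_succ_bot hk]
  abel

theorem punctureSum_Kmap' (hi : i ≤ n) :
    punctureSum π uM uA uB (Kmap' π n g uM uA uB j) i = punctureSum' π uA uB j i := by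
  have hn : punctureSum' π uA uB j n = handleSum π uA uB (Kmap' π n g uM uA uB j) 0 := by
    simp [punctureSum', handleSum_Kmap' g.zero_le]
  rw [punctureSum, ← hn]
  refine (eq_backwardSolution hi fun k _ hk => ?_).symm
  rw [extV_Kmap'_fst hk, punctureSum', punctureSum', Finset.sum_eq_sum_Ico_succ_bot hk]
  abel

theorem Kmap'_Kmap : Kmap' π n g uM uA uB (Kmap π n g uM uA uB j) = j := by
  refine Prod.ext (eq_of_extV_eq fun k hk => ?_)
    (Prod.ext (eq_of_extV_eq fun k hk => ?_) (eq_of_extV_eq fun k hk => ?_))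
  · rw [extV_Kmap'_fst hk, punctureSum'_Kmap hk, extV_Kmap_fst hk]
    abel
  · rw [extV_Kmap'_snd_fst hk, handleSum'_Kmap hk, extV_Kmap_snd_fst hk,
      extV_Kmap_snd_snd hk, recoupleA_decouple]
  · rw [extV_Kmap'_snd_snd hk, handleSum'_Kmap hk, extV_Kmap_snd_fst hk,
      extV_Kmap_snd_snd hk, recoupleB_decouple]

theorem Kmap_Kmap' : Kmap π n g uM uA uB (Kmap' π n g uM uA uB j) = j := by
  refine Prod.ext (eq_of_extV_eq fun k hk => ?_)
    (Prod.ext (eq_of_extV_eq fun k hk => ?_) (eq_of_extV_eq fun k hk => ?_))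
  · rw [extV_Kmap_fst hk, punctureSum_Kmap' hk, extV_Kmap'_fst hk]
    abel
  · rw [extV_Kmap_snd_fst hk, handleSum_Kmap' hk, extV_Kmap'_snd_fst hk,
      extV_Kmap'_snd_snd hk, decoupleA_recouple]
  · rw [extV_Kmap_snd_snd hk, handleSum_Kmap' hk, extV_Kmap'_snd_fst hk,
      extV_Kmap'_snd_snd hk, decoupleB_recouple]

end Inverse

theorem decoupling_bijective (π : G →* (V ≃ₗ[ℝ] V)) (n g : ℕ) (uM uA uB : ℕ → G) :
    ∀ j : (Fin n → V) × (Fin g → V) × (Fin g → V),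
      Kmap' π n g uM uA uB (Kmap π n g uM uA uB j) = j ∧
      Kmap π n g uM uA uB (Kmap' π n g uM uA uB j) = j :=
  fun _ => ⟨Kmap'_Kmap, Kmap_Kmap'⟩
end

section
/- Fix n, g ∈ ℕ and, for X ∈ {M₁,…,Mₙ, A₁, B₁,…,A_g, B_g}, elements u_X ∈ G and j_X ∈ V, and let X = (u_X, −Ad*(u_X⁻¹) j_X) ∈ H. Then the product [B_g, A_g⁻¹]⋯[B_1, A_1⁻¹]·Mₙ⋯M₁ in H, where [B,A⁻¹] := B·A⁻¹·B⁻¹·A, equals (u_tot, −Ad*(u_tot⁻¹) j_tot), where u_{K_i} = u_{B_i}u_{A_i}⁻¹u_{B_i}⁻¹u_{A_i}, u_tot = u_{K_g}⋯u_{K_1}·u_{Mₙ}⋯u_{M₁}, j^{H_i} = (Id − Ad*(u_{A_i}⁻¹u_{B_i}⁻¹u_{A_i})) j_{A_i} + (Ad*(u_{A_i}⁻¹u_{B_i}⁻¹u_{A_i}) − Ad*(u_{B_i}⁻¹u_{A_i})) j_{B_i}, and j_tot = Σ_{i=1}^{n} Ad*(u_{M_{i−1}}⋯u_{M₁}) j_{M_i}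 + Σ_{i=1}^{g} Ad*(u_{K_{i−1}}⋯u_{K_1}·u_{Mₙ}⋯u_{M₁}) j^{H_i} (empty products of group elements being the identity of G). -/
/-!
STATEMENT 6: With holonomies `X = (u_X, −Ad*(u_X⁻¹) j_X) ∈ H = G ⋉ V`, the product
`[B_g,A_g⁻¹]⋯[B_1,A_1⁻¹]·M_n⋯M_1` (with `[B,A⁻¹] := B·A⁻¹·B⁻¹·A`) equals
`(u_tot, −Ad*(u_tot⁻¹) j_tot)` with `u_tot` and `j_tot` given by the explicit formulas
of the paper.  Indices are 0-based; empty products of group elements are the identity.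
-/

variable {G V : Type*} [Group G] [AddCommGroup V] [Module ℝ V]

/-- Multiplication of `H = G ⋉ V` : `(u₁,a₁)·(u₂,a₂) = (u₁u₂, a₁ + Ad*(u₁⁻¹)a₂)`. -/
def Hmul (π : G →* (V ≃ₗ[ℝ] V)) (p q : G × V) : G × V :=
  (p.1 * q.1, p.2 + Ads π p.1⁻¹ q.2)

/-- Inversion in `H = G ⋉ V`. -/
def Hinv (π : G →* (V ≃ₗ[ℝ] V)) (p : G × V) : G × V :=
  (p.1⁻¹, - Ads π p.1 p.2)

/-- The group commutator `[B, A⁻¹] = B·A⁻¹·B⁻¹·A` in `H`. -/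
def Hcomm (π : G →* (V ≃ₗ[ℝ] V)) (B A : G × V) : G × V :=
  Hmul π (Hmul π (Hmul π B (Hinv π A)) (Hinv π B)) A

/-- The ordered product of a list of elements of `H` (left to right). -/
def Hprod (π : G →* (V ≃ₗ[ℝ] V)) (l : List (G × V)) : G × V :=
  l.foldr (Hmul π) (1, 0)

/-!
In the coordinates `X = (u, −Ad*(u⁻¹) j)` the product of `H` reads
`(u, j)·(w, s) = (uw, Ad*(w) j + s)`: a current is transported by `Ad*` of the group part to
its right and then added. The commutator formula is one instance of this rule, and the total
holonomy follows by induction on the number of factors.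
-/

abbrev holonomy (π : G →* (V ≃ₗ[ℝ] V)) (u : G) (j : V) : G × V := (u, - Ads π u⁻¹ j)

section Holonomy

variable (π : G →* (V ≃ₗ[ℝ] V))

lemma Ads_Ads (a b : G) (x : V) : Ads π a (Ads π b x) = Ads π (b * a) x := by
  simp [Ads, map_mul]

lemma Hmul_holonomy (u w : G) (j s : V) :
    Hmul π (holonomy π u j) (holonomy π w s) = holonomy π (u * w) (Ads π w j + s) := by
  simp only [Hmul, holonomy, Prod.mk.injEq, map_neg, map_add, Ads_Ads, mul_inv_rev,
    mul_inv_cancel_left, true_and]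
  abel

lemma Hinv_holonomy (u : G) (j : V) :
    Hinv π (holonomy π u j) = holonomy π u⁻¹ (- Ads π u⁻¹ j) := by
  simp [Hinv, holonomy]

lemma Hcomm_holonomy (uA uB : ℕ → G) (jA jB : ℕ → V) (i : ℕ) :
    Hcomm π (holonomy π (uB i) (jB i)) (holonomy π (uA i) (jA i))
      = holonomy π (uKel uA uB i) (jHel π uA uB jA jB i) := by
  rw [Hcomm, Hinv_holonomy, Hinv_holonomy, Hmul_holonomy, Hmul_holonomy, Hmul_holonomy]
  refine congrArg (holonomy π _) ?_
  simp only [jHel, map_add, map_neg, Ads_Ads]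
  abel

lemma Hprod_cons (p : G × V) (l : List (G × V)) : Hprod π (p :: l) = Hmul π p (Hprod π l) :=
  rfl

lemma List.map_range_succ_rev {α : Type*} (F : ℕ → α) (k : ℕ) :
    (List.range (k + 1)).map (fun t => F (k + 1 - 1 - t))
      = F k :: (List.range k).map (fun t => F (k - 1 - t)) := by
  rw [List.range_succ_eq_map, List.map_cons, List.map_map]
  refine congrArg₂ List.cons (by simp) (List.map_congr_left fun t _ => ?_)
  simp only [Function.comp_apply]
  congr 1
  omega

lemma prodD_zero_succ (f : ℕ → G) (k : ℕ) : prodD f 0 (k + 1) = f k * prodD f 0 k := by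
  simp only [prodD, Nat.sub_zero, List.map_range_succ_rev f k, List.prod_cons]

lemma Hprod_holonomy_append (u : ℕ → G) (j : ℕ → V) (w : G) (s : V) (l : List (G × V))
    (hl : Hprod π l = holonomy π w s) (k : ℕ) :
    Hprod π (((List.range k).map fun t => holonomy π (u (k - 1 - t)) (j (k - 1 - t))) ++ l)
      = holonomy π (prodD u 0 k * w)
          (s + ∑ i ∈ Finset.range k, Ads π (prodD u 0 i * w) (j i)) := by
  induction k with
  | zero => simpa [prodD] using hl
  | succ k ih =>
    rw [List.map_range_succ_rev (fun i => holonomy π (u i) (j i)) k, List.cons_append,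
      Hprod_cons, ih, Hmul_holonomy, prodD_zero_succ, Finset.sum_range_succ, mul_assoc]
    exact congrArg (holonomy π _) (by abel)

lemma Hprod_holonomy (u : ℕ → G) (j : ℕ → V) (k : ℕ) :
    Hprod π ((List.range k).map fun t => holonomy π (u (k - 1 - t)) (j (k - 1 - t)))
      = holonomy π (prodD u 0 k) (∑ i ∈ Finset.range k, Ads π (prodD u 0 i) (j i)) := by
  simpa using Hprod_holonomy_append π u j 1 0 [] (by simp [Hprod]) k

end Holonomy

theorem total_holonomy (π : G →* (V ≃ₗ[ℝ] V)) (n g : ℕ)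
    (uM uA uB : ℕ → G) (jM jA jB : ℕ → V) :
    Hprod π
      (((List.range g).map fun t =>
          Hcomm π (uB (g - 1 - t), - Ads π (uB (g - 1 - t))⁻¹ (jB (g - 1 - t)))
            (uA (g - 1 - t), - Ads π (uA (g - 1 - t))⁻¹ (jA (g - 1 - t)))) ++
        ((List.range n).map fun t =>
          (uM (n - 1 - t), - Ads π (uM (n - 1 - t))⁻¹ (jM (n - 1 - t)))))
    = (prodD (uKel uA uB) 0 g * prodD uM 0 n,
        - Ads π (prodD (uKel uA uB) 0 g * prodD uM 0 n)⁻¹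
          ((∑ i ∈ Finset.range n, Ads π (prodD uM 0 i) (jM i)) +
            ∑ i ∈ Finset.range g,
              Ads π (prodD (uKel uA uB) 0 i * prodD uM 0 n)
                (jHel π uA uB jA jB i))) := by
  simp only [Hcomm_holonomy]
  exact Hprod_holonomy_append π _ _ _ _ _ (Hprod_holonomy π uM jM n) g
end

section
/- Let ħ be a nonzero real number and W a complex vector space. For (h,f) ∈ G × C∞(G,ℝ) define the operator Γ(h,f) on the space of all functions Ψ : G^{n+2g} → W by (Γ(h,f)Ψ)(p) = exp(i f(Φ∞(β(p)))/ħ) · Ψ(Ãd_{h⁻¹}(p)). Then Γ(e,0) is the identity and Γ((h₁,f₁)·(h₂,f₂)) = Γ(h₁,f₁) ∘ Γ(h₂,f₂) for all (h₁,f₁), (h₂,f₂), where the product is taken in G ⋉ C∞(G); i.e. Γ is a representation of the group G ⋉ C∞(G) on the space of W-valued functions on G^{n+2g}. -/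
/-!
`Φ∞` is a product of words in the coordinates, so it commutes with any group homomorphism
applied coordinatewise, in particular with conjugation by `h⁻¹`; and `β` turns the left
translation `v ↦ h⁻¹ v` of the puncture coordinates into that conjugation. Hence
`Φ∞ (β (Ãd_{h⁻¹} p)) = h⁻¹ Φ∞ (β p) h`: the phase of `Γ(h₂,f₂)` read at `Ãd_{h₁⁻¹} p` is the
phase of `f₂ ∘ Ad_{h₁⁻¹}` at `p`. Since `Ãd` is a right action, the two phases multiply to
the phase of `f₁ + f₂ ∘ Ad_{h₁⁻¹}`.
-/

open scoped Manifold

variable {G : Type*} [Group G]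

/-- Extension of a finite tuple of group elements by `1`. -/
def extG {n : ℕ} (u : Fin n → G) : ℕ → G := fun k => if h : k < n then u ⟨k, h⟩ else 1

/-- `Φ∞(u_{M_1},…,u_{B_g}) = u_{K_g}⋯u_{K_1}·u_{M_n}⋯u_{M_1}`. -/
def PhiInfty {n g : ℕ} (p : (Fin n → G) × (Fin g → G) × (Fin g → G)) : G :=
  prodD (uKel (extG p.2.1) (extG p.2.2)) 0 g * prodD (extG p.1) 0 n

/-- `β` conjugates the puncture components into the fixed conjugacy classes. -/
def betaMap {n g : ℕ} (gmu : Fin n → G) (p : (Fin n → G) × (Fin g → G) × (Fin g → G)) :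
    (Fin n → G) × (Fin g → G) × (Fin g → G) :=
  (fun i => p.1 i * gmu i * (p.1 i)⁻¹, p.2.1, p.2.2)

/-- `Ãd_{h⁻¹}` : left translation on the puncture components, conjugation on the
handle components. -/
def adT {n g : ℕ} (h : G) (p : (Fin n → G) × (Fin g → G) × (Fin g → G)) :
    (Fin n → G) × (Fin g → G) × (Fin g → G) :=
  (fun i => h⁻¹ * p.1 i, fun i => h⁻¹ * p.2.1 i * h, fun i => h⁻¹ * p.2.2 i * h)

/-- `(Γ(h,f)Ψ)(p) = exp(i f(Φ∞(β(p)))/hbar) • Ψ(Ãd_{h⁻¹}(p))`. -/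
noncomputable def Gamma {n g : ℕ} {W : Type*} [AddCommGroup W] [Module ℂ W]
    (gmu : Fin n → G) (hbar : ℝ) (h : G) (f : G → ℝ)
    (Ψ : (Fin n → G) × (Fin g → G) × (Fin g → G) → W) :
    (Fin n → G) × (Fin g → G) × (Fin g → G) → W :=
  fun p => Complex.exp (Complex.I * (f (PhiInfty (betaMap gmu p)) : ℂ) / (hbar : ℂ)) •
    Ψ (adT h p)

section Equivariance

variable {H : Type*} [Group H]

theorem map_prodD (φ : G →* H) (f : ℕ → G) (lo hi : ℕ) :
    φ (prodD f lo hi) = prodD (φ ∘ f) lo hi := by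
  simp only [prodD, map_list_prod, List.map_map]
  rfl

theorem extG_map {n : ℕ} (φ : G →* H) (u : Fin n → G) : extG (φ ∘ u) = φ ∘ extG u := by
  funext k
  by_cases hk : k < n <;> simp [extG, hk]

theorem uKel_map (φ : G →* H) (uA uB : ℕ → G) :
    uKel (φ ∘ uA) (φ ∘ uB) = φ ∘ uKel uA uB := by
  funext i
  simp [uKel]

theorem map_PhiInfty {n g : ℕ} (φ : G →* H) (p : (Fin n → G) × (Fin g → G) × (Fin g → G)) :
    φ (PhiInfty p) = PhiInfty (φ ∘ p.1, φ ∘ p.2.1, φ ∘ p.2.2) := by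
  simp only [PhiInfty, map_mul, map_prodD, extG_map, uKel_map]

end Equivariance

section Action

variable {n g : ℕ}

theorem betaMap_adT (gmu : Fin n → G) (h : G) (p : (Fin n → G) × (Fin g → G) × (Fin g → G)) :
    betaMap gmu (adT h p) =
      (MulAut.conj h⁻¹ ∘ (betaMap gmu p).1, MulAut.conj h⁻¹ ∘ p.2.1, MulAut.conj h⁻¹ ∘ p.2.2) := by
  ext i <;> simp [betaMap, adT, mul_assoc]

theorem PhiInfty_betaMap_adT (gmu : Fin n → G) (h : G)
    (p : (Fin n → G) × (Fin g → G) × (Fin g → G)) :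
    PhiInfty (betaMap gmu (adT h p)) = h⁻¹ * PhiInfty (betaMap gmu p) * h := by
  have hconj := map_PhiInfty (MulAut.conj h⁻¹).toMonoidHom (betaMap gmu p)
  simp only [MulEquiv.coe_toMonoidHom, MulAut.conj_apply, inv_inv] at hconj
  rw [betaMap_adT]
  exact hconj.symm

theorem adT_one (p : (Fin n → G) × (Fin g → G) × (Fin g → G)) : adT 1 p = p := by
  ext i <;> simp [adT]

theorem adT_mul (h₁ h₂ : G) (p : (Fin n → G) × (Fin g → G) × (Fin g → G)) :
    adT (h₁ * h₂) p = adT h₂ (adT h₁ p) := by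
  ext i <;> simp [adT, mul_assoc]

end Action

section Representation

variable {n g : ℕ} {W : Type*} [AddCommGroup W] [Module ℂ W]

theorem Gamma_one_zero (gmu : Fin n → G) (hbar : ℝ)
    (Ψ : (Fin n → G) × (Fin g → G) × (Fin g → G) → W) : Gamma gmu hbar 1 0 Ψ = Ψ := by
  funext p
  simp [Gamma, adT_one]

theorem Gamma_mul (gmu : Fin n → G) (hbar : ℝ) (h₁ h₂ : G) (f₁ f₂ : G → ℝ)
    (Ψ : (Fin n → G) × (Fin g → G) × (Fin g → G) → W) :
    Gamma gmu hbar (h₁ * h₂) (f₁ + fun x => f₂ (h₁⁻¹ * x * h₁)) Ψ =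
      Gamma gmu hbar h₁ f₁ (Gamma gmu hbar h₂ f₂ Ψ) := by
  funext p
  simp only [Gamma, adT_mul, PhiInfty_betaMap_adT, smul_smul, ← Complex.exp_add, Pi.add_apply]
  congr 2
  push_cast
  ring

end Representation

theorem Gamma_representation_general
    {E : Type*} [NormedAddCommGroup E] [NormedSpace ℝ E]
    {HM : Type*} [TopologicalSpace HM] (I : ModelWithCorners ℝ E HM)
    [TopologicalSpace G] [ChartedSpace HM G]
    {W : Type*} [AddCommGroup W] [Module ℂ W]
    {n g : ℕ} (gmu : Fin n → G) (hbar : ℝ) :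
    (∀ Ψ : (Fin n → G) × (Fin g → G) × (Fin g → G) → W,
        Gamma gmu hbar (1 : G) (0 : G → ℝ) Ψ = Ψ) ∧
    (∀ (h₁ h₂ : G) (f₁ f₂ : G → ℝ),
        ContMDiff I 𝓘(ℝ, ℝ) (⊤ : ℕ∞) f₁ → ContMDiff I 𝓘(ℝ, ℝ) (⊤ : ℕ∞) f₂ →
        ∀ Ψ : (Fin n → G) × (Fin g → G) × (Fin g → G) → W,
          Gamma gmu hbar (h₁ * h₂) (f₁ + fun x => f₂ (h₁⁻¹ * x * h₁)) Ψ =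
            Gamma gmu hbar h₁ f₁ (Gamma gmu hbar h₂ f₂ Ψ)) :=
  ⟨Gamma_one_zero gmu hbar, fun h₁ h₂ f₁ f₂ _ _ => Gamma_mul gmu hbar h₁ h₂ f₁ f₂⟩

theorem Gamma_representation
    {E : Type*} [NormedAddCommGroup E] [NormedSpace ℝ E]
    {HM : Type*} [TopologicalSpace HM] (I : ModelWithCorners ℝ E HM)
    [TopologicalSpace G] [ChartedSpace HM G] [LieGroup I (⊤ : ℕ∞) G]
    {W : Type*} [AddCommGroup W] [Module ℂ W]
    {n g : ℕ} (gmu : Fin n → G) (hbar : ℝ) (hhbar : hbar ≠ 0) :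
    (∀ Ψ : (Fin n → G) × (Fin g → G) × (Fin g → G) → W,
        Gamma gmu hbar (1 : G) (0 : G → ℝ) Ψ = Ψ) ∧
    (∀ (h₁ h₂ : G) (f₁ f₂ : G → ℝ),
        ContMDiff I 𝓘(ℝ, ℝ) (⊤ : ℕ∞) f₁ → ContMDiff I 𝓘(ℝ, ℝ) (⊤ : ℕ∞) f₂ →
        ∀ Ψ : (Fin n → G) × (Fin g → G) × (Fin g → G) → W,
          Gamma gmu hbar (h₁ * h₂) (f₁ + fun x => f₂ (h₁⁻¹ * x * h₁)) Ψ =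
            Gamma gmu hbar h₁ f₁ (Gamma gmu hbar h₂ f₂ Ψ)) :=
  Gamma_representation_general I gmu hbar
end

section
/- Fix g_μ ∈ E and a complex Banach space W, and for F ∈ C₀(E×E,ℂ) and continuous ψ : E → W define (π(F)ψ)(v) = ∫_E F(z, v.g_μ) ψ(z⁻¹v) dz. Then π(F)ψ is a well-defined continuous function E → W, and π is multiplicative: π(F₁ • F₂)ψ = π(F₁)(π(F₂)ψ) for all F₁, F₂ ∈ C₀(E×E,ℂ) and all continuous ψ : E → W. -/
/-!
Since `F` has compact support, the integrand of `π(F)ψ` vanishes for `z` outside the compact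
projection of `tsupport F` to the first factor, uniformly in `v`, so continuity is that of a
parametric integral over a compact set. For multiplicativity, the integrand
`F₁(z,u) F₂(z⁻¹w, z⁻¹.u) ψ(w⁻¹v)` of `π(F₁ • F₂)ψ` is continuous with support in
`K₁ × K₁K₂`, where `Kᵢ` is the projection of `tsupport Fᵢ`, so Fubini applies; after
swapping, the substitution `w ↦ zw` in the inner integral together with
`(z⁻¹v).g_μ = z⁻¹.(v.g_μ)` turns it into `(π(F₂)ψ)(z⁻¹v)`.
-/

open MeasureTheory

variable {E : Type*} [Group E] [TopologicalSpace E] [IsTopologicalGroup E]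
  [LocallyCompactSpace E] [SecondCountableTopology E] [T2Space E]
  [MeasurableSpace E] [BorelSpace E]

/-- The convolution product of the transformation group algebra:
`(F₁ • F₂)(v,u) = ∫_E F₁(z,u) F₂(z⁻¹v, z⁻¹.u) dz`. -/
noncomputable def convOp (μ : Measure E) (act : E → E → E) (F₁ F₂ : E × E → ℂ) :
    E × E → ℂ :=
  fun q => ∫ z, F₁ (z, q.2) * F₂ (z⁻¹ * q.1, act z⁻¹ q.2) ∂μ

/-- The representation `(π(F)ψ)(v) = ∫_E F(z, v.g_μ) ψ(z⁻¹v) dz`. -/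
noncomputable def piOp {W : Type*} [NormedAddCommGroup W] [NormedSpace ℂ W]
    (μ : Measure E) (act : E → E → E) (gmu : E) (F : E × E → ℂ) (ψ : E → W) : E → W :=
  fun v => ∫ z, F (z, act v gmu) • ψ (z⁻¹ * v) ∂μ

open Pointwise

theorem apply_eq_zero_of_notMem_image_fst_tsupport {α β M : Type*} [TopologicalSpace α]
    [TopologicalSpace β] [Zero M] {F : α × β → M} {z : α} (hz : z ∉ Prod.fst '' tsupport F)
    (u : β) : F (z, u) = 0 :=
  image_eq_zero_of_notMem_tsupport fun h => hz ⟨(z, u), h, rfl⟩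

theorem hasCompactSupport_of_ne_zero_imp_mem {G M : Type*} [Group G] [TopologicalSpace G]
    [ContinuousMul G] [R1Space G] [Zero M] {f : G × G → M} {K₁ K₂ : Set G}
    (hK₁ : IsCompact K₁) (hK₂ : IsCompact K₂)
    (hf : ∀ z w, f (z, w) ≠ 0 → z ∈ K₁ ∧ z⁻¹ * w ∈ K₂) :
    HasCompactSupport f :=
  HasCompactSupport.intro (hK₁.prod (hK₁.mul hK₂)) fun ⟨z, w⟩ hzw => by
    by_contra h
    obtain ⟨h₁, h₂⟩ := hf z w h
    exact hzw ⟨h₁, by simpa using Set.mul_mem_mul h₁ h₂⟩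

section Representation

variable {G W : Type*} [NormedAddCommGroup W] [NormedSpace ℂ W]

theorem continuous_piOp [Group G] [TopologicalSpace G] [IsTopologicalGroup G]
    [MeasurableSpace G] [OpensMeasurableSpace G] (μ : Measure G) [IsFiniteMeasureOnCompacts μ]
    {act : G → G → G} {gmu : G} (hact : Continuous fun v => act v gmu) {F : G × G → ℂ}
    (hF : Continuous F) (hFs : HasCompactSupport F) {ψ : G → W} (hψ : Continuous ψ) :
    Continuous (piOp μ act gmu F ψ) := by
  rw [← continuousOn_univ]
  refine continuousOn_integral_of_compact_support (hFs.image continuous_fst)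
    (Continuous.continuousOn (by fun_prop)) fun v z _ hz => ?_
  rw [apply_eq_zero_of_notMem_image_fst_tsupport hz, zero_smul]

theorem piOp_inv_mul_apply [Group G] [MeasurableSpace G] [MeasurableMul G] (μ : Measure G)
    [μ.IsMulLeftInvariant] {act : G → G → G}
    (hact_mul : ∀ z w u : G, act (z * w) u = act z (act w u)) (gmu : G) (F : G × G → ℂ)
    (ψ : G → W) (z v : G) :
    piOp μ act gmu F ψ (z⁻¹ * v) = ∫ w, F (z⁻¹ * w, act z⁻¹ (act v gmu)) • ψ (w⁻¹ * v) ∂μ := by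
  rw [← integral_mul_left_eq_self _ z]
  simp only [piOp, hact_mul, inv_mul_cancel_left, mul_inv_rev, mul_assoc]

theorem piOp_convOp [CompleteSpace W] [Group G] [TopologicalSpace G] [IsTopologicalGroup G]
    [SecondCountableTopology G] [MeasurableSpace G] [BorelSpace G]
    (μ : Measure G) [μ.IsMulLeftInvariant] [IsFiniteMeasureOnCompacts μ] [SFinite μ]
    {act : G → G → G} (hact_cont : ∀ u, Continuous fun z => act z u)
    (hact_mul : ∀ z w u : G, act (z * w) u = act z (act w u)) (gmu : G) {F₁ F₂ : G × G → ℂ}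
    (hc₁ : Continuous F₁) (hs₁ : HasCompactSupport F₁) (hc₂ : Continuous F₂)
    (hs₂ : HasCompactSupport F₂) {ψ : G → W} (hψ : Continuous ψ) :
    piOp μ act gmu (convOp μ act F₁ F₂) ψ = piOp μ act gmu F₁ (piOp μ act gmu F₂ ψ) := by
  funext v
  set f : G → G → W := fun z w =>
    (F₁ (z, act v gmu) * F₂ (z⁻¹ * w, act z⁻¹ (act v gmu))) • ψ (w⁻¹ * v)
  have hf : Integrable (Function.uncurry f) (μ.prod μ) := by
    have := hact_cont (act v gmu)
    refine Continuous.integrable_of_hasCompactSupport (by fun_prop) ?_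
    refine hasCompactSupport_of_ne_zero_imp_mem (hs₁.image continuous_fst)
      (hs₂.image continuous_fst) fun z w h => ⟨?_, ?_⟩ <;> by_contra hz <;>
      simp [f, apply_eq_zero_of_notMem_image_fst_tsupport hz] at h
  calc piOp μ act gmu (convOp μ act F₁ F₂) ψ v = ∫ w, ∫ z, f z w ∂μ ∂μ := by
        simp only [piOp, convOp, f, ← integral_smul_const]
    _ = ∫ z, ∫ w, f z w ∂μ ∂μ := (integral_integral_swap hf).symm
    _ = ∫ z, F₁ (z, act v gmu) • piOp μ act gmu F₂ ψ (z⁻¹ * v) ∂μ := by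
        simp only [f, mul_smul, integral_smul, piOp_inv_mul_apply μ hact_mul]

end Representation

theorem piOp_continuous_and_multiplicative_general
    {W : Type*} [NormedAddCommGroup W] [NormedSpace ℂ W] [CompleteSpace W]
    (μ : Measure E) [μ.IsHaarMeasure]
    (act : E → E → E)
    (hact_cont : Continuous fun p : E × E => act p.1 p.2)
    (hact_mul : ∀ z w u : E, act (z * w) u = act z (act w u))
    (gmu : E) :
    (∀ (F : E × E → ℂ), Continuous F → HasCompactSupport F →
        ∀ ψ : E → W, Continuous ψ → Continuous (piOp μ act gmu F ψ)) ∧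
    (∀ (F₁ F₂ : E × E → ℂ),
        Continuous F₁ → HasCompactSupport F₁ →
        Continuous F₂ → HasCompactSupport F₂ →
        ∀ ψ : E → W, Continuous ψ →
          piOp μ act gmu (convOp μ act F₁ F₂) ψ =
            piOp μ act gmu F₁ (piOp μ act gmu F₂ ψ)) :=
  ⟨fun _ hF hFs _ hψ => continuous_piOp μ (by fun_prop) hF hFs hψ,
    fun _ _ hc₁ hs₁ hc₂ hs₂ _ hψ =>
      piOp_convOp μ (fun _ => by fun_prop) hact_mul gmu hc₁ hs₁ hc₂ hs₂ hψ⟩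

theorem piOp_continuous_and_multiplicative
    {W : Type*} [NormedAddCommGroup W] [NormedSpace ℂ W] [CompleteSpace W]
    (μ : Measure E) [μ.IsHaarMeasure] [μ.IsMulRightInvariant] [μ.IsInvInvariant]
    (act : E → E → E)
    (hact_cont : Continuous fun p : E × E => act p.1 p.2)
    (hact_mul : ∀ z w u : E, act (z * w) u = act z (act w u))
    (hact_one : ∀ u : E, act 1 u = u)
    (gmu : E) :
    (∀ (F : E × E → ℂ), Continuous F → HasCompactSupport F →
        ∀ ψ : E → W, Continuous ψ → Continuous (piOp μ act gmu F ψ)) ∧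
    (∀ (F₁ F₂ : E × E → ℂ),
        Continuous F₁ → HasCompactSupport F₁ →
        Continuous F₂ → HasCompactSupport F₂ →
        ∀ ψ : E → W, Continuous ψ →
          piOp μ act gmu (convOp μ act F₁ F₂) ψ =
            piOp μ act gmu F₁ (piOp μ act gmu F₂ ψ)) :=
  piOp_continuous_and_multiplicative_general μ act hact_cont hact_mul gmu
end
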